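/- Let φ(a,b) be an INQ⁻ formula (connectives ∧, ⩔, ⊗, ⊥, ⊤, ¬, ?; no →) without occurrences of p, q. In the model M_{pq} with worlds w₁,w₂,w₃ and V(w₁)={p}, V(w₂)={q}, V(w₃)=∅, the proposition [φ(?p,?q)] is distinct from each of: A = downward closure of {{w₁,w₂},{w₁,w₃}}, B = downward closure of {{w₁,w₂},{w₂,w₃}}, and C = downward closure of {{w₁,w₂},{w₃}}. -/
import Mathlib


/-- Formulas of propositional inquisitive logic (full language INQ⁺). -/
inductive Form (α : Type) : Type
  | atom : α → Form α
  | bot  : Form α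
  | top  : Form α
  | and  : Form α → Form α → Form α
  | or   : Form α → Form α → Form α        -- inquisitive disjunction ⩔
  | tensor : Form α → Form α → Form α      -- tensor ⊗
  | impl : Form α → Form α → Form α
  | neg  : Form α → Form α
  | quest : Form α → Form α                -- ?

namespace Form

/-- A size measure making `?ψ` bigger than `¬ψ`. -/
def sz {α : Type} : Form α → Nat
  | atom _ => 1
  | bot => 1
  | top => 1
  | and ψ χ => ψ.sz + χ.sz + 1
  | or ψ χ => ψ.sz + χ.sz + 1
  | tensor ψ χ => ψ.sz + χ.sz + 1
  | impl ψ χ => ψ.sz + χ.sz + 1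
  | neg ψ => ψ.sz + 1
  | quest ψ => ψ.sz + 2

end Form

/-- Support relation of inquisitive semantics, over a model with worlds `W`
and valuation `V`. -/
def supports {W α : Type} (V : W → α → Prop) : Set W → Form α → Prop
  | s, .atom p => ∀ w ∈ s, V w p
  | s, .bot => s = ∅
  | _, .top => True
  | s, .and ψ χ => supports V s ψ ∧ supports V s χ
  | s, .or ψ χ => supports V s ψ ∨ supports V s χ
  | s, .tensor ψ χ => ∃ t₁ t₂, supports V t₁ ψ ∧ supports V t₂ χ ∧ s = t₁ ∪ t₂
  | s, .impl ψ χ => ∀ t ⊆ s, supports V t ψ → supports V t χ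
  | s, .neg ψ => ∀ t ⊆ s, supports V t ψ → t = ∅
  | s, .quest ψ => supports V s ψ ∨ supports V s (.neg ψ)
  termination_by s φ => φ.sz
  decreasing_by all_goals simp [Form.sz] <;> omega

/-- The inquisitive proposition of a formula: the set of supporting states. -/
def inqProp {W α : Type} (V : W → α → Prop) (φ : Form α) : Set (Set W) :=
  {s | supports V s φ}

namespace Form

/-- `φ` contains no occurrence of the implication connective (language INQ⁻). -/
def noImpl {α : Type} : Form α → Prop
  | atom _ => True
  | bot => True
  | top => True
  | and ψ χ => ψ.noImpl ∧ χ.noImpl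
  | or ψ χ => ψ.noImpl ∧ χ.noImpl
  | tensor ψ χ => ψ.noImpl ∧ χ.noImpl
  | impl _ _ => False
  | neg ψ => ψ.noImpl
  | quest ψ => ψ.noImpl

/-- The set of propositional letters occurring in a formula. -/
def atoms {α : Type} : Form α → Set α
  | atom r => {r}
  | bot => ∅
  | top => ∅
  | and ψ χ => ψ.atoms ∪ χ.atoms
  | or ψ χ => ψ.atoms ∪ χ.atoms
  | tensor ψ χ => ψ.atoms ∪ χ.atoms
  | impl ψ χ => ψ.atoms ∪ χ.atoms
  | neg ψ => ψ.atoms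
  | quest ψ => ψ.atoms

end Form

/-- Substitution of formulas `ψ`, `χ` for the designated atoms `a`, `b`:
`substAB a b ψ χ φ` is the instance `φ(ψ,χ)` of the template `φ(a,b)`. -/
def substAB {α : Type} [DecidableEq α] (a b : α) (ψ χ : Form α) :
    Form α → Form α
  | .atom r => if r = a then ψ else if r = b then χ else .atom r
  | .bot => .bot
  | .top => .top
  | .and θ η => .and (substAB a b ψ χ θ) (substAB a b ψ χ η)
  | .or θ η => .or (substAB a b ψ χ θ) (substAB a b ψ χ η)
  | .tensor θ η => .tensor (substAB a b ψ χ θ) (substAB a b ψ χ η)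
  | .impl θ η => .impl (substAB a b ψ χ θ) (substAB a b ψ χ η)
  | .neg θ => .neg (substAB a b ψ χ θ)
  | .quest θ => .quest (substAB a b ψ χ θ)

/-- The model `M_{pq}`: worlds `w₁ = 0`, `w₂ = 1`, `w₃ = 2`, with
`V(w₁) = {p}`, `V(w₂) = {q}`, `V(w₃) = ∅`. -/
def Vpq {α : Type} (p q : α) : Fin 3 → α → Prop :=
  fun w r => (w = 0 ∧ r = p) ∨ (w = 1 ∧ r = q)


/-! ### Auxiliary development -/

open Finset in
/-- Downward closure of a list of finite generators. -/
def Dn (G : List (Finset (Fin 3))) : Set (Set (Fin 3)) :=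
  {s | ∃ g ∈ G, s ⊆ ↑g}

lemma Dn_le {G H : List (Finset (Fin 3))}
    (h : ∀ g ∈ G, ∃ k ∈ H, g ⊆ k) : Dn G ⊆ Dn H := by
  rintro s ⟨g, hg, hs⟩
  obtain ⟨k, hk, hgk⟩ := h g hg
  exact ⟨k, hk, hs.trans (Finset.coe_subset.2 hgk)⟩

/-- Criterion for equality of downward closures. -/
def DnCrit (G H : List (Finset (Fin 3))) : Prop :=
  (∀ g ∈ G, ∃ k ∈ H, g ⊆ k) ∧ (∀ k ∈ H, ∃ g ∈ G, k ⊆ g)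

instance (G H : List (Finset (Fin 3))) : Decidable (DnCrit G H) := by
  unfold DnCrit; infer_instance

lemma Dn_eq_iff {G H : List (Finset (Fin 3))} : Dn G = Dn H ↔ DnCrit G H := by
  constructor
  · intro h
    constructor
    · intro g hg
      have : (↑g : Set (Fin 3)) ∈ Dn H := h ▸ ⟨g, hg, subset_rfl⟩
      obtain ⟨k, hk, hgk⟩ := this
      exact ⟨k, hk, Finset.coe_subset.1 hgk⟩
    · intro k hk
      have : (↑k : Set (Fin 3)) ∈ Dn G := h ▸ ⟨k, hk, subset_rfl⟩
      obtain ⟨g, hg, hkg⟩ := this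
      exact ⟨g, hg, Finset.coe_subset.1 hkg⟩
  · rintro ⟨h1, h2⟩
    exact subset_antisymm (Dn_le h1) (Dn_le h2)

lemma Dn_union (G H : List (Finset (Fin 3))) :
    Dn G ∪ Dn H = Dn (G ++ H) := by
  ext s
  simp only [Dn, Set.mem_union, Set.mem_setOf_eq, List.mem_append]
  constructor
  · rintro (⟨g, hg, hs⟩ | ⟨g, hg, hs⟩)
    exacts [⟨g, Or.inl hg, hs⟩, ⟨g, Or.inr hg, hs⟩]
  · rintro ⟨g, hg | hg, hs⟩
    exacts [Or.inl ⟨g, hg, hs⟩, Or.inr ⟨g, hg, hs⟩]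

lemma Dn_inter (G H : List (Finset (Fin 3))) :
    Dn G ∩ Dn H = Dn (G.flatMap fun g => H.map fun h => g ∩ h) := by
  ext s
  simp only [Dn, Set.mem_inter_iff, Set.mem_setOf_eq, List.mem_flatMap, List.mem_map]
  constructor
  · rintro ⟨⟨g, hg, hsg⟩, ⟨h, hh, hsh⟩⟩
    exact ⟨g ∩ h, ⟨g, hg, h, hh, rfl⟩, by
      rw [Finset.coe_inter]; exact Set.subset_inter hsg hsh⟩
  · rintro ⟨k, ⟨g, hg, h, hh, rfl⟩, hs⟩
    rw [Finset.coe_inter] at hs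
    exact ⟨⟨g, hg, hs.trans Set.inter_subset_left⟩,
           ⟨h, hh, hs.trans Set.inter_subset_right⟩⟩

lemma Dn_tensor (G H : List (Finset (Fin 3))) :
    {s : Set (Fin 3) | ∃ t₁ t₂, t₁ ∈ Dn G ∧ t₂ ∈ Dn H ∧ s = t₁ ∪ t₂} =
      Dn (G.flatMap fun g => H.map fun h => g ∪ h) := by
  ext s
  simp only [Dn, Set.mem_setOf_eq, List.mem_flatMap, List.mem_map]
  constructor
  · rintro ⟨t₁, t₂, ⟨g, hg, h1⟩, ⟨h, hh, h2⟩, rfl⟩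
    refine ⟨g ∪ h, ⟨g, hg, h, hh, rfl⟩, ?_⟩
    rw [Finset.coe_union]
    exact Set.union_subset_union h1 h2
  · rintro ⟨k, ⟨g, hg, h, hh, rfl⟩, hs⟩
    rw [Finset.coe_union] at hs
    refine ⟨s ∩ ↑g, s ∩ ↑h, ⟨g, hg, Set.inter_subset_right⟩,
      ⟨h, hh, Set.inter_subset_right⟩, ?_⟩
    rw [← Set.inter_union_distrib_left]
    exact (Set.inter_eq_left.2 hs).symm

/-- Generator for the negation. -/
def negGen (G : List (Finset (Fin 3))) : List (Finset (Fin 3)) :=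
  [Finset.univ.filter fun w => ∀ g ∈ G, w ∉ g]

lemma Dn_neg (G : List (Finset (Fin 3))) :
    {s : Set (Fin 3) | ∀ t ⊆ s, t ∈ Dn G → t = ∅} = Dn (negGen G) := by
  ext s
  simp only [Dn, negGen, Set.mem_setOf_eq, List.mem_singleton]
  constructor
  · intro h
    refine ⟨_, rfl, fun w hw => ?_⟩
    simp only [Finset.coe_filter, Finset.mem_univ, true_and, Set.mem_setOf_eq]
    intro g hg hwg
    have := h {w} (Set.singleton_subset_iff.2 hw)
      ⟨g, hg, Set.singleton_subset_iff.2 hwg⟩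
    exact absurd this (Set.singleton_ne_empty w)
  · rintro ⟨k, rfl, hs⟩ t hts ⟨g, hg, htg⟩
    ext w
    simp only [Set.mem_empty_iff_false, iff_false]
    intro hwt
    have := hs (hts hwt)
    simp only [Finset.coe_filter, Finset.mem_univ, true_and, Set.mem_setOf_eq] at this
    exact this g hg (htg hwt)

/-- The seven reachable propositions, by generator lists. -/
def goodLists : List (List (Finset (Fin 3))) :=
  [[∅], [{0}, {1}, {2}], [{0}, {1, 2}], [{1}, {0, 2}], [{0, 2}, {1, 2}],
   [{0, 1}, {0, 2}, {1, 2}], [Finset.univ]]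

def Good (P : Set (Set (Fin 3))) : Prop := ∃ G ∈ goodLists, P = Dn G

lemma dec_union : ∀ G ∈ goodLists, ∀ H ∈ goodLists,
    ∃ K ∈ goodLists, DnCrit (G ++ H) K := by decide

lemma dec_inter : ∀ G ∈ goodLists, ∀ H ∈ goodLists,
    ∃ K ∈ goodLists, DnCrit (G.flatMap fun g => H.map fun h => g ∩ h) K := by decide

lemma dec_tensor : ∀ G ∈ goodLists, ∀ H ∈ goodLists,
    ∃ K ∈ goodLists, DnCrit (G.flatMap fun g => H.map fun h => g ∪ h) K := by decide

lemma dec_neg : ∀ G ∈ goodLists, ∃ K ∈ goodLists, DnCrit (negGen G) K := by decide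

lemma Good_union {P Q} (hP : Good P) (hQ : Good Q) : Good (P ∪ Q) := by
  obtain ⟨G, hG, rfl⟩ := hP; obtain ⟨H, hH, rfl⟩ := hQ
  obtain ⟨K, hK, hcrit⟩ := dec_union G hG H hH
  exact ⟨K, hK, (Dn_union G H).trans (Dn_eq_iff.2 hcrit)⟩

lemma Good_inter {P Q} (hP : Good P) (hQ : Good Q) : Good (P ∩ Q) := by
  obtain ⟨G, hG, rfl⟩ := hP; obtain ⟨H, hH, rfl⟩ := hQ
  obtain ⟨K, hK, hcrit⟩ := dec_inter G hG H hH
  exact ⟨K, hK, (Dn_inter G H).trans (Dn_eq_iff.2 hcrit)⟩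

lemma Good_tensor {P Q} (hP : Good P) (hQ : Good Q) :
    Good {s : Set (Fin 3) | ∃ t₁ t₂, t₁ ∈ P ∧ t₂ ∈ Q ∧ s = t₁ ∪ t₂} := by
  obtain ⟨G, hG, rfl⟩ := hP; obtain ⟨H, hH, rfl⟩ := hQ
  obtain ⟨K, hK, hcrit⟩ := dec_tensor G hG H hH
  exact ⟨K, hK, (Dn_tensor G H).trans (Dn_eq_iff.2 hcrit)⟩

lemma Good_neg {P} (hP : Good P) :
    Good {s : Set (Fin 3) | ∀ t ⊆ s, t ∈ P → t = ∅} := by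
  obtain ⟨G, hG, rfl⟩ := hP
  obtain ⟨K, hK, hcrit⟩ := dec_neg G hG
  exact ⟨K, hK, (Dn_neg G).trans (Dn_eq_iff.2 hcrit)⟩

section Unfold

variable {W α : Type} (V : W → α → Prop)

lemma inqProp_and (ψ χ : Form α) :
    inqProp V (.and ψ χ) = inqProp V ψ ∩ inqProp V χ := by
  ext s; rw [inqProp, Set.mem_setOf_eq, supports]; rfl

lemma inqProp_or (ψ χ : Form α) :
    inqProp V (.or ψ χ) = inqProp V ψ ∪ inqProp V χ := by
  ext s; rw [inqProp, Set.mem_setOf_eq, supports]; rfl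

lemma inqProp_tensor (ψ χ : Form α) :
    inqProp V (.tensor ψ χ) =
      {s | ∃ t₁ t₂, t₁ ∈ inqProp V ψ ∧ t₂ ∈ inqProp V χ ∧ s = t₁ ∪ t₂} := by
  ext s; rw [inqProp, Set.mem_setOf_eq, supports]; rfl

lemma inqProp_neg (ψ : Form α) :
    inqProp V (.neg ψ) = {s | ∀ t ⊆ s, t ∈ inqProp V ψ → t = ∅} := by
  ext s; rw [inqProp, Set.mem_setOf_eq, supports]; rfl

lemma inqProp_quest (ψ : Form α) :
    inqProp V (.quest ψ) =
      inqProp V ψ ∪ {s | ∀ t ⊆ s, t ∈ inqProp V ψ → t = ∅} := by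
  ext s
  rw [inqProp, Set.mem_setOf_eq, supports]
  constructor
  · rintro (h | h)
    · exact Or.inl h
    · rw [supports] at h; exact Or.inr h
  · rintro (h | h)
    · exact Or.inl h
    · refine Or.inr ?_; rw [supports]; exact h

end Unfold

section Base

variable {α : Type} [DecidableEq α] (p q : α)

lemma inqProp_atom_p (hpq : p ≠ q) :
    inqProp (Vpq p q) (.atom p) = Dn [{0}] := by
  ext s
  rw [inqProp, Set.mem_setOf_eq, supports]
  constructor
  · intro h
    refine ⟨{0}, List.mem_singleton.2 rfl, fun w hw => ?_⟩
    rcases h w hw with ⟨h0, _⟩ | ⟨_, hq'⟩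
    · simp [h0]
    · exact absurd hq' hpq
  · rintro ⟨g, hg, hs⟩ w hw
    rw [List.mem_singleton] at hg
    subst hg
    have := hs hw
    simp only [Finset.coe_singleton, Set.mem_singleton_iff] at this
    exact Or.inl ⟨this, rfl⟩

lemma inqProp_atom_q (hpq : p ≠ q) :
    inqProp (Vpq p q) (.atom q) = Dn [{1}] := by
  ext s
  rw [inqProp, Set.mem_setOf_eq, supports]
  constructor
  · intro h
    refine ⟨{1}, List.mem_singleton.2 rfl, fun w hw => ?_⟩
    rcases h w hw with ⟨_, hq'⟩ | ⟨h1, _⟩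
    · exact absurd hq'.symm hpq
    · simp [h1]
  · rintro ⟨g, hg, hs⟩ w hw
    rw [List.mem_singleton] at hg
    subst hg
    have := hs hw
    simp only [Finset.coe_singleton, Set.mem_singleton_iff] at this
    exact Or.inr ⟨this, rfl⟩

lemma inqProp_atom_other {r : α} (hrp : r ≠ p) (hrq : r ≠ q) :
    inqProp (Vpq p q) (.atom r) = Dn [∅] := by
  ext s
  rw [inqProp, Set.mem_setOf_eq, supports]
  simp only [Dn, Vpq, List.mem_singleton, exists_eq_left, Finset.coe_empty,
    Set.subset_empty_iff]
  constructor
  · intro h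
    ext w
    simp only [Set.mem_empty_iff_false, iff_false]
    intro hw
    rcases h w hw with ⟨_, h'⟩ | ⟨_, h'⟩
    exacts [hrp h', hrq h']
  · rintro rfl w hw
    exact absurd hw (Set.notMem_empty w)

lemma inqProp_bot : inqProp (Vpq p q) (.bot : Form α) = Dn [∅] := by
  ext s
  rw [inqProp, Set.mem_setOf_eq, supports]
  simp [Dn, Set.subset_empty_iff]

lemma inqProp_top : inqProp (Vpq p q) (.top : Form α) = Dn [Finset.univ] := by
  ext s
  rw [inqProp, Set.mem_setOf_eq, supports]
  simp [Dn]

end Base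

/-- Main induction: the proposition of any implication-free substitution
instance is one of the seven good propositions. -/
lemma main_good {α : Type} [DecidableEq α] (p q a b : α) (hpq : p ≠ q) :
    ∀ φ : Form α, φ.noImpl → p ∉ φ.atoms → q ∉ φ.atoms →
      Good (inqProp (Vpq p q)
        (substAB a b (Form.quest (Form.atom p)) (Form.quest (Form.atom q)) φ)) := by
  intro φ
  induction φ with
  | atom r =>
    intro _ hp hq
    simp only [Form.atoms, Set.mem_singleton_iff] at hp hq
    rw [substAB]
    split
    · rw [inqProp_quest, inqProp_atom_p p q hpq, Dn_neg]
      exact ⟨[{0}, {1, 2}], by decide,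
        (Dn_union [{0}] (negGen [{0}])).trans (Dn_eq_iff.2 (by decide))⟩
    · split
      · rw [inqProp_quest, inqProp_atom_q p q hpq, Dn_neg]
        exact ⟨[{1}, {0, 2}], by decide,
          (Dn_union [{1}] (negGen [{1}])).trans (Dn_eq_iff.2 (by decide))⟩
      · rw [inqProp_atom_other p q (fun h => hp h.symm) (fun h => hq h.symm)]
        exact ⟨[∅], by decide, rfl⟩
  | bot =>
    intro _ _ _
    rw [substAB, inqProp_bot]
    exact ⟨[∅], by decide, rfl⟩
  | top =>
    intro _ _ _
    rw [substAB, inqProp_top]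
    exact ⟨[Finset.univ], by decide, rfl⟩
  | and ψ χ ihψ ihχ =>
    rintro ⟨h1, h2⟩ hp hq
    simp only [Form.atoms, Set.mem_union, not_or] at hp hq
    rw [substAB, inqProp_and]
    exact Good_inter (ihψ h1 hp.1 hq.1) (ihχ h2 hp.2 hq.2)
  | or ψ χ ihψ ihχ =>
    rintro ⟨h1, h2⟩ hp hq
    simp only [Form.atoms, Set.mem_union, not_or] at hp hq
    rw [substAB, inqProp_or]
    exact Good_union (ihψ h1 hp.1 hq.1) (ihχ h2 hp.2 hq.2)
  | tensor ψ χ ihψ ihχ =>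
    rintro ⟨h1, h2⟩ hp hq
    simp only [Form.atoms, Set.mem_union, not_or] at hp hq
    rw [substAB, inqProp_tensor]
    exact Good_tensor (ihψ h1 hp.1 hq.1) (ihχ h2 hp.2 hq.2)
  | impl ψ χ ihψ ihχ =>
    rintro h
    exact absurd h id
  | neg ψ ihψ =>
    intro h hp hq
    rw [substAB, inqProp_neg]
    exact Good_neg (ihψ h hp hq)
  | quest ψ ihψ =>
    intro h hp hq
    rw [substAB, inqProp_quest]
    exact Good_union (ihψ h hp hq) (Good_neg (ihψ h hp hq))

lemma target_A :
    {s : Set (Fin 3) | s ⊆ {0, 1} ∨ s ⊆ {0, 2}} = Dn [{0, 1}, {0, 2}] := by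
  ext s
  simp [Dn]

lemma target_B :
    {s : Set (Fin 3) | s ⊆ {0, 1} ∨ s ⊆ {1, 2}} = Dn [{0, 1}, {1, 2}] := by
  ext s
  simp [Dn]

lemma target_C :
    {s : Set (Fin 3) | s ⊆ {0, 1} ∨ s ⊆ {2}} = Dn [{0, 1}, {2}] := by
  ext s
  simp [Dn]

lemma dec_notA : ∀ G ∈ goodLists, ¬ DnCrit G [{0, 1}, {0, 2}] := by decide
lemma dec_notB : ∀ G ∈ goodLists, ¬ DnCrit G [{0, 1}, {1, 2}] := by decide
lemma dec_notC : ∀ G ∈ goodLists, ¬ DnCrit G [{0, 1}, {2}] := by decide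
/-- for an INQ⁻ formula φ(a,b) without occurrences of p, q,
the proposition [φ(?p,?q)] in M_pq differs from each of
A = {s | s ⊆ {w1,w2} ∨ s ⊆ {w1,w3}}, B = {s | s ⊆ {w1,w2} ∨ s ⊆ {w2,w3}},
C = {s | s ⊆ {w1,w2} ∨ s ⊆ {w3}}. -/
theorem prop_ne_ABC {α : Type} [DecidableEq α] (p q a b : α)
    (hpq : p ≠ q) (φ : Form α) (hni : φ.noImpl)
    (hp : p ∉ φ.atoms) (hq : q ∉ φ.atoms) :
    inqProp (Vpq p q)
        (substAB a b (Form.quest (Form.atom p)) (Form.quest (Form.atom q)) φ) ≠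
      {s : Set (Fin 3) | s ⊆ {0, 1} ∨ s ⊆ {0, 2}} ∧
    inqProp (Vpq p q)
        (substAB a b (Form.quest (Form.atom p)) (Form.quest (Form.atom q)) φ) ≠
      {s : Set (Fin 3) | s ⊆ {0, 1} ∨ s ⊆ {1, 2}} ∧
    inqProp (Vpq p q)
        (substAB a b (Form.quest (Form.atom p)) (Form.quest (Form.atom q)) φ) ≠
      {s : Set (Fin 3) | s ⊆ {0, 1} ∨ s ⊆ {2}} := by
  obtain ⟨G, hG, hEq⟩ := main_good p q a b hpq φ hni hp hq
  rw [hEq, target_A, target_B, target_C]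
  exact ⟨fun h => dec_notA G hG (Dn_eq_iff.1 h),
         fun h => dec_notB G hG (Dn_eq_iff.1 h),
         fun h => dec_notC G hG (Dn_eq_iff.1 h)⟩
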